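/- Let p be a prime element of ℤ[ω] that does not divide 14, and suppose there is no t ∈ ℤ[ω] with p dividing t³ − 28 (i.e., 28 is not a cube modulo p). Then for all integers x and y, if p divides 7x³ + 2y³ in ℤ[ω], then p divides x and p divides y in ℤ[ω]. -/

import Mathlib

open Polynomial

/-- The ring of Eisenstein integers ℤ[ω] = ℤ[X]/(X² + X + 1). -/
abbrev Eisenstein : Type := AdjoinRoot (X ^ 2 + X + 1 : ℤ[X])

/-- ω, a primitive cube root of unity, satisfying ω² + ω + 1 = 0. -/
noncomputable def ω : Eisenstein := AdjoinRoot.root _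

/-!
The prime `p` lies over a rational prime `q`, so an integer `x` with `p ∤ x` has an integer
inverse `b` modulo `p`. If moreover `p ∣ 7x³ + 2y³`, then
`(-2yb)³ = -4b³ · 2y³ ≡ 28 (bx)³ ≡ 28 (mod p)`, so 28 would be a cube modulo `p`.
Hence `p ∣ x`, then `p ∣ 2y³`, and since `p ∤ 2` also `p ∣ y`.
-/

theorem Prime.exists_nat_prime_dvd_of_dvd_natCast {R : Type*} [CommSemiring R] {p : R}
    (hp : Prime p) {n : ℕ} (hn : n ≠ 0) (h : p ∣ (n : R)) : ∃ q : ℕ, q.Prime ∧ p ∣ (q : R) := by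
  induction n using induction_on_primes with
  | zero => exact (hn rfl).elim
  | one => exact absurd (isUnit_of_dvd_one (by simpa using h)) hp.not_isUnit
  | prime_mul q a hq ih =>
    rw [Nat.cast_mul] at h
    rcases hp.dvd_or_dvd h with hpq | hpa
    · exact ⟨q, hq, hpq⟩
    · exact ih (right_ne_zero_of_mul hn) hpa

theorem exists_int_mul_sub_one_dvd {R : Type*} [CommRing R] {p : R} {q : ℕ} (hq : q.Prime)
    (hpq : p ∣ (q : R)) {x : ℤ} (hx : ¬ p ∣ (x : R)) : ∃ b : ℤ, p ∣ (b : R) * x - 1 := by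
  have hqx : ¬ (q : ℤ) ∣ x := by
    rintro ⟨c, rfl⟩
    exact hx (by push_cast; exact hpq.mul_right _)
  obtain ⟨a, b, hab⟩ := (Nat.prime_iff_prime_int.mp hq).coprime_iff_not_dvd.mpr hqx
  refine ⟨b, ?_⟩
  have hab' : ((a * q + b * x : ℤ) : R) = 1 := by rw [hab, Int.cast_one]
  push_cast at hab'
  rw [show (b : R) * x - 1 = -(a * q) by linear_combination hab']
  exact (hpq.mul_left _).neg_right

theorem dvd_cube_sub_28_of_dvd {R : Type*} [CommRing R] {p x y b : R}
    (h : p ∣ 7 * x ^ 3 + 2 * y ^ 3) (hb : p ∣ b * x - 1) : p ∣ (-2 * y * b) ^ 3 - 28 := by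
  have key : (-2 * y * b) ^ 3 - 28
      = -4 * b ^ 3 * (7 * x ^ 3 + 2 * y ^ 3) + 28 * ((b * x) ^ 2 + b * x + 1) * (b * x - 1) := by
    ring
  rw [key]
  exact dvd_add (h.mul_left _) (hb.mul_left _)

namespace Eisenstein

theorem omega_sq_add_omega_add_one : ω ^ 2 + ω + 1 = 0 := by
  have h := AdjoinRoot.eval₂_root (X ^ 2 + X + 1 : ℤ[X])
  rwa [eval₂_add, eval₂_add, eval₂_pow, eval₂_X, eval₂_one] at h

theorem exists_eq_intCast_add_intCast_mul_omega (z : Eisenstein) :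
    ∃ a b : ℤ, z = a + b * ω := by
  have hz : z ∈ Algebra.adjoin ℤ {ω} := by
    rw [ω, AdjoinRoot.adjoinRoot_eq_top]; trivial
  induction hz using Algebra.adjoin_induction with
  | mem z hz => exact ⟨0, 1, by rw [Set.mem_singleton_iff.mp hz]; simp⟩
  | algebraMap r => exact ⟨r, 0, by simp⟩
  | add z w _ _ hz hw =>
    obtain ⟨a, b, rfl⟩ := hz
    obtain ⟨c, d, rfl⟩ := hw
    exact ⟨a + c, b + d, by push_cast; ring⟩
  | mul z w _ _ hz hw =>
    obtain ⟨a, b, rfl⟩ := hz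
    obtain ⟨c, d, rfl⟩ := hw
    exact ⟨a * c - b * d, a * d + b * c - b * d, by
      push_cast; linear_combination b * d * omega_sq_add_omega_add_one⟩

theorem exists_natCast_dvd {z : Eisenstein} (hz : z ≠ 0) :
    ∃ n : ℕ, n ≠ 0 ∧ z ∣ (n : Eisenstein) := by
  obtain ⟨a, b, rfl⟩ := exists_eq_intCast_add_intCast_mul_omega z
  have hnorm : 0 ≤ a ^ 2 - a * b + b ^ 2 := by nlinarith [sq_nonneg (a - b)]
  -- `n` is the norm of `a + bω`, and `a - b - bω` is its conjugate.
  refine ⟨(a ^ 2 - a * b + b ^ 2).toNat, ?_, a - b - b * ω, ?_⟩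
  · suffices a ^ 2 - a * b + b ^ 2 ≠ 0 by omega
    intro h0
    obtain ⟨rfl, rfl⟩ : a = 0 ∧ b = 0 := by
      constructor <;> nlinarith [sq_nonneg (a - b), sq_nonneg (a + b)]
    exact hz (by simp)
  · rw [← Int.cast_natCast, Int.toNat_of_nonneg hnorm]
    push_cast
    linear_combination (b : Eisenstein) ^ 2 * omega_sq_add_omega_add_one

end Eisenstein

theorem prime_divides_x_and_y (p : Eisenstein) (hp : Prime p)
    (h14 : ¬ p ∣ 14) (h28 : ¬ ∃ t : Eisenstein, p ∣ t ^ 3 - 28) :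
    ∀ x y : ℤ, p ∣ (7 * (x : Eisenstein) ^ 3 + 2 * (y : Eisenstein) ^ 3) →
      p ∣ (x : Eisenstein) ∧ p ∣ (y : Eisenstein) := by
  intro x y h
  obtain ⟨n, hn, hpn⟩ := Eisenstein.exists_natCast_dvd hp.ne_zero
  obtain ⟨q, hq, hpq⟩ := hp.exists_nat_prime_dvd_of_dvd_natCast hn hpn
  have hx : p ∣ (x : Eisenstein) := by
    by_contra hx
    obtain ⟨b, hb⟩ := exists_int_mul_sub_one_dvd hq hpq hx
    exact h28 ⟨-2 * y * b, dvd_cube_sub_28_of_dvd h hb⟩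
  have h2 : ¬ p ∣ 2 := fun h2 => h14 (h2.trans ⟨7, by norm_num⟩)
  have h2y : p ∣ 2 * (y : Eisenstein) ^ 3 :=
    (dvd_add_right ((hx.pow three_ne_zero).mul_left 7)).mp h
  exact ⟨hx, hp.dvd_of_dvd_pow ((hp.dvd_or_dvd h2y).resolve_left h2)⟩
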